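/- arXiv:2404.09300 — 4 statements merged into one kernel-verified Lean document; each statement's English description precedes it below -/
import Mathlib

section
/- Let X and Y be complex Banach spaces, let E, H : X → Y be bounded linear operators, and for each n ∈ ℕ let E_n, H_n : X_n → Y_n be bounded linear operators. Assume that E is bijective with bounded inverse, that H is a compact operator, that (E_n) converges stably to E, and that (H_n) converges compactly to H. Then (E_n + H_n) converges regularly to E + H. -/
open Filter Topology

section

variable {X Y : Type*} [NormedAddCommGroup X] [NormedSpace ℂ X] [CompleteSpace X]
  [NormedAddCommGroup Y] [NormedSpace ℂ Y] [CompleteSpace Y]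
  {Xn : ℕ → Type*} [∀ n, NormedAddCommGroup (Xn n)] [∀ n, NormedSpace ℂ (Xn n)]
  [∀ n, CompleteSpace (Xn n)]
  {Yn : ℕ → Type*} [∀ n, NormedAddCommGroup (Yn n)] [∀ n, NormedSpace ℂ (Yn n)]
  [∀ n, CompleteSpace (Yn n)]

/-- `Fₙ` converges (discretely) to `F`: `‖Fₙ(pₙ x) − qₙ(F x)‖ → 0` for every `x ∈ X`. -/
def Converges (p : ∀ n, X →L[ℂ] Xn n) (q : ∀ n, Y →L[ℂ] Yn n)
    (Fn : ∀ n, Xn n →L[ℂ] Yn n) (F : X →L[ℂ] Y) : Prop :=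
  ∀ x : X, Tendsto (fun n => ‖Fn n (p n x) - q n (F x)‖) atTop (𝓝 0)

/-- A sequence `(yₙ)`, `yₙ ∈ Yₙ`, is `Q`-compact: every subsequence has a further
subsequence along which `‖yₙ − qₙ y‖ → 0` for some `y ∈ Y`. -/
def QCompact (q : ∀ n, Y →L[ℂ] Yn n) (y : ∀ n, Yn n) : Prop :=
  ∀ φ : ℕ → ℕ, StrictMono φ → ∃ ψ : ℕ → ℕ, StrictMono ψ ∧ ∃ z : Y,
    Tendsto (fun k => ‖y (φ (ψ k)) - q (φ (ψ k)) z‖) atTop (𝓝 0)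

/-- A sequence `(xₙ)`, `xₙ ∈ Xₙ`, is `P`-compact. -/
def PCompact (p : ∀ n, X →L[ℂ] Xn n) (x : ∀ n, Xn n) : Prop :=
  ∀ φ : ℕ → ℕ, StrictMono φ → ∃ ψ : ℕ → ℕ, StrictMono ψ ∧ ∃ z : X,
    Tendsto (fun k => ‖x (φ (ψ k)) - p (φ (ψ k)) z‖) atTop (𝓝 0)

/-- `Fₙ` converges compactly to `F`. -/
def ConvergesCompactly (p : ∀ n, X →L[ℂ] Xn n) (q : ∀ n, Y →L[ℂ] Yn n)
    (Fn : ∀ n, Xn n →L[ℂ] Yn n) (F : X →L[ℂ] Y) : Prop :=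
  Converges p q Fn F ∧
    ∀ x : ∀ n, Xn n, (∀ n, ‖x n‖ ≤ 1) → QCompact q (fun n => Fn n (x n))

/-- `Fₙ` converges stably to `F`: `Fₙ → F` and eventually each `Fₙ` is bijective with
uniformly bounded inverse. -/
def ConvergesStably (p : ∀ n, X →L[ℂ] Xn n) (q : ∀ n, Y →L[ℂ] Yn n)
    (Fn : ∀ n, Xn n →L[ℂ] Yn n) (F : X →L[ℂ] Y) : Prop :=
  Converges p q Fn F ∧
    ∃ n₀ : ℕ, ∃ C : ℝ, 0 < C ∧ ∀ n, n₀ ≤ n →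
      ∃ G : Yn n →L[ℂ] Xn n,
        (∀ xn, G (Fn n xn) = xn) ∧ (∀ yn, Fn n (G yn) = yn) ∧ ‖G‖ ≤ C

/-- `Fₙ` converges regularly to `F`: `Fₙ → F` and every bounded sequence `(xₙ)` for which
`(Fₙ xₙ)` is `Q`-compact is itself `P`-compact. -/
def ConvergesRegularly (p : ∀ n, X →L[ℂ] Xn n) (q : ∀ n, Y →L[ℂ] Yn n)
    (Fn : ∀ n, Xn n →L[ℂ] Yn n) (F : X →L[ℂ] Y) : Prop :=
  Converges p q Fn F ∧
    ∀ x : ∀ n, Xn n, (∃ M : ℝ, ∀ n, ‖x n‖ ≤ M) →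
      QCompact q (fun n => Fn n (x n)) → PCompact p x


lemma qcompact_smul' (q : ∀ n, Y →L[ℂ] Yn n) (c : ℂ) {y : ∀ n, Yn n}
    (h : QCompact q y) : QCompact q (fun n => c • y n) := by
  intro φ hφ
  obtain ⟨ψ, hψ, z, hz⟩ := h φ hφ
  refine ⟨ψ, hψ, c • z, ?_⟩
  have heq : (fun k => ‖c • y (φ (ψ k)) - q (φ (ψ k)) (c • z)‖)
      = fun k => ‖c‖ * ‖y (φ (ψ k)) - q (φ (ψ k)) z‖ := by
    funext k; rw [map_smul, ← smul_sub, norm_smul]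
  rw [heq]
  simpa using hz.const_mul ‖c‖

lemma qcompact_sub' (q : ∀ n, Y →L[ℂ] Yn n) {y y' : ∀ n, Yn n}
    (h : QCompact q y) (h' : QCompact q y') :
    QCompact q (fun n => y n - y' n) := by
  intro φ hφ
  obtain ⟨ψ₁, hψ₁, z₁, hz₁⟩ := h φ hφ
  obtain ⟨ψ₂, hψ₂, z₂, hz₂⟩ := h' (φ ∘ ψ₁) (hφ.comp hψ₁)
  refine ⟨ψ₁ ∘ ψ₂, hψ₁.comp hψ₂, z₁ - z₂, ?_⟩
  have h1 : Tendsto (fun k => ‖y (φ (ψ₁ (ψ₂ k))) - q (φ (ψ₁ (ψ₂ k))) z₁‖) atTop (𝓝 0) :=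
    hz₁.comp hψ₂.tendsto_atTop
  refine squeeze_zero (fun k => norm_nonneg _) (fun k => ?_)
    (by simpa using h1.add hz₂)
  have hrw : y (φ (ψ₁ (ψ₂ k))) - y' (φ (ψ₁ (ψ₂ k))) - q (φ (ψ₁ (ψ₂ k))) (z₁ - z₂)
      = (y (φ (ψ₁ (ψ₂ k))) - q (φ (ψ₁ (ψ₂ k))) z₁)
        - (y' (φ (ψ₁ (ψ₂ k))) - q (φ (ψ₁ (ψ₂ k))) z₂) := by
    rw [map_sub]; abel
  simp only [Function.comp_apply]
  rw [hrw]
  exact norm_sub_le _ _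

/-- If `E` is invertible, `H` is compact, `Eₙ` converges stably to `E` and `Hₙ` converges
compactly to `H`, then `Eₙ + Hₙ` converges regularly to `E + H`. -/
theorem regular_convergence_of_stable_add_compact
    (p : ∀ n, X →L[ℂ] Xn n) (q : ∀ n, Y →L[ℂ] Yn n)
    (hp : ∀ x : X, Tendsto (fun n => ‖p n x‖) atTop (𝓝 ‖x‖))
    (hq : ∀ y : Y, Tendsto (fun n => ‖q n y‖) atTop (𝓝 ‖y‖))
    (E H : X →L[ℂ] Y) (En Hn : ∀ n, Xn n →L[ℂ] Yn n)
    (Einv : Y →L[ℂ] X) (hE1 : ∀ x, Einv (E x) = x) (hE2 : ∀ y, E (Einv y) = y)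
    (hHcpt : IsCompactOperator H)
    (hEst : ConvergesStably p q En E)
    (hHcc : ConvergesCompactly p q Hn H) :
    ConvergesRegularly p q (fun n => En n + Hn n) (E + H) := by
  constructor
  · -- convergence of the sum
    intro x₀
    have hE := hEst.1 x₀
    have hH := hHcc.1 x₀
    refine squeeze_zero (fun n => norm_nonneg _) (fun n => ?_) (by simpa using hE.add hH)
    have hrw : (En n + Hn n) (p n x₀) - q n ((E + H) x₀)
        = (En n (p n x₀) - q n (E x₀)) + (Hn n (p n x₀) - q n (H x₀)) := by
      simp only [ContinuousLinearMap.add_apply, map_add]; abel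
    rw [hrw]
    exact norm_add_le _ _
  · -- regularity
    intro x ⟨M, hM⟩ hQ
    set M' : ℝ := max M 1 with hM'def
    have hM'pos : (0:ℝ) < M' := lt_of_lt_of_le one_pos (le_max_right _ _)
    have hM'ne : ((M' : ℂ)) ≠ 0 := by
      simp only [ne_eq, Complex.ofReal_eq_zero]; exact ne_of_gt hM'pos
    -- Hn xₙ is Q-compact
    have hHx : QCompact q (fun n => Hn n (x n)) := by
      have hb : ∀ n, ‖((M' : ℂ))⁻¹ • x n‖ ≤ 1 := by
        intro n
        rw [norm_smul, norm_inv]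
        have : ‖((M' : ℂ))‖ = M' := by
          rw [Complex.norm_real]; exact abs_of_pos hM'pos
        rw [this]
        calc M'⁻¹ * ‖x n‖ ≤ M'⁻¹ * M' := by
              apply mul_le_mul_of_nonneg_left _ (inv_nonneg.mpr hM'pos.le)
              exact le_trans (hM n) (le_max_left _ _)
          _ = 1 := inv_mul_cancel₀ (ne_of_gt hM'pos)
      have h1 := hHcc.2 (fun n => ((M' : ℂ))⁻¹ • x n) hb
      have h2 := qcompact_smul' q ((M' : ℂ)) h1
      have heq : (fun n => (M' : ℂ) • Hn n (((M' : ℂ))⁻¹ • x n)) = fun n => Hn n (x n) := by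
        funext n
        rw [map_smul, smul_smul, mul_inv_cancel₀ hM'ne, one_smul]
      rwa [heq] at h2
    -- En xₙ is Q-compact
    have hEx : QCompact q (fun n => En n (x n)) := by
      have h3 := qcompact_sub' q hQ hHx
      have heq : (fun n => (En n + Hn n) (x n) - Hn n (x n)) = fun n => En n (x n) := by
        funext n; simp [ContinuousLinearMap.add_apply]
      rwa [heq] at h3
    -- now conclude P-compactness
    obtain ⟨n₀, C, hC, hGs⟩ := hEst.2
    intro φ hφ
    obtain ⟨ψ, hψ, z, hz⟩ := hEx φ hφ
    refine ⟨ψ, hψ, Einv z, ?_⟩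
    have hzE : E (Einv z) = z := hE2 z
    have hst : Tendsto (fun k => ‖En (φ (ψ k)) (p (φ (ψ k)) (Einv z))
        - q (φ (ψ k)) (E (Einv z))‖) atTop (𝓝 0) :=
      (hEst.1 (Einv z)).comp (hφ.comp hψ).tendsto_atTop
    have hlim : Tendsto (fun k => C * ‖En (φ (ψ k)) (x (φ (ψ k))) - q (φ (ψ k)) z‖
        + C * ‖En (φ (ψ k)) (p (φ (ψ k)) (Einv z)) - q (φ (ψ k)) (E (Einv z))‖)
        atTop (𝓝 0) := by
      simpa using (hz.const_mul C).add (hst.const_mul C)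
    refine squeeze_zero' (Eventually.of_forall fun k => norm_nonneg _) ?_ hlim
    filter_upwards [eventually_ge_atTop n₀] with k hk
    set m := φ (ψ k) with hm
    have hmn₀ : n₀ ≤ m := le_trans hk (le_trans (hψ.le_apply) (hφ.le_apply))
    obtain ⟨G, hG1, hG2, hGn⟩ := hGs m hmn₀
    have hx : x m - p m (Einv z) = G (En m (x m) - En m (p m (Einv z))) := by
      rw [map_sub, hG1, hG1]
    have hsplit : En m (x m) - En m (p m (Einv z))
        = (En m (x m) - q m z) - (En m (p m (Einv z)) - q m (E (Einv z))) := by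
      rw [hzE]; abel
    calc ‖x m - p m (Einv z)‖
        = ‖G (En m (x m) - En m (p m (Einv z)))‖ := by rw [hx]
      _ ≤ ‖G‖ * ‖En m (x m) - En m (p m (Einv z))‖ := G.le_opNorm _
      _ ≤ C * ‖En m (x m) - En m (p m (Einv z))‖ :=
          mul_le_mul_of_nonneg_right hGn (norm_nonneg _)
      _ ≤ C * (‖En m (x m) - q m z‖ + ‖En m (p m (Einv z)) - q m (E (Einv z))‖) := by
          apply mul_le_mul_of_nonneg_left _ hC.le
          rw [hsplit]; exact norm_sub_le _ _
      _ = C * ‖En m (x m) - q m z‖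
          + C * ‖En m (p m (Einv z)) - q m (E (Einv z))‖ := by ring


end
end

section
/- Let H be a complex Hilbert space and let A : H → H be a bounded linear operator satisfying Re⟨A u, u⟩ ≥ ‖u‖² for all u ∈ H. Let V ⊆ H be a closed subspace. Then for every u ∈ H there exists a unique element p(u) ∈ V such that ⟨A(p(u)), v⟩ = ⟨A u, v⟩ for all v ∈ V; moreover, the resulting Galerkin projection satisfies the quasi-optimality estimate ‖u − p(u)‖ ≤ ‖A‖ · inf_{v ∈ V} ‖u − v‖ for every u ∈ H. -/
/-- For a coercive bounded operator `A` on a complex Hilbert space `H` and a closed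
subspace `V`, the Galerkin projection onto `V` exists and is unique, and it satisfies the
quasi-optimality estimate `‖u − p(u)‖ ≤ ‖A‖ · inf_{v ∈ V} ‖u − v‖`. -/
theorem galerkin_projection_exists_unique_and_quasi_optimal
    {H : Type*} [NormedAddCommGroup H] [InnerProductSpace ℂ H] [CompleteSpace H]
    (A : H →L[ℂ] H)
    (hcoer : ∀ u : H, ‖u‖ ^ 2 ≤ (inner ℂ (A u) u : ℂ).re)
    (V : Submodule ℂ H) (hV : IsClosed (V : Set H)) :
    (∀ u : H, ∃! pu : V,
        ∀ v ∈ V, (inner ℂ (A (pu : H)) v : ℂ) = inner ℂ (A u) v) ∧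
    (∀ u : H, ∀ pu : V,
        (∀ v ∈ V, (inner ℂ (A (pu : H)) v : ℂ) = inner ℂ (A u) v) →
        ‖u - (pu : H)‖ ≤ ‖A‖ * ⨅ v : V, ‖u - (v : H)‖) := by
  haveI : CompleteSpace V := hV.completeSpace_coe
  -- The operator `B : V → V`, `B w = P_V (A w)`.
  set P := V.orthogonalProjectionOnto with hP
  set B : V →L[ℂ] V := P.comp (A.comp V.subtypeL) with hB
  have key : ∀ w v : V, (inner ℂ (B w) v : ℂ) = inner ℂ (A (w : H)) (v : H) := by
    intro w v
    have h0 := Submodule.starProjection_inner_eq_zero (K := V) (A (w : H)) (v : H) v.2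
    rw [inner_sub_left, sub_eq_zero, Submodule.starProjection_apply] at h0
    have h1 : (inner ℂ (B w) v : ℂ) = inner ℂ ((B w : H)) (v : H) := rfl
    rw [h1]
    exact h0.symm
  have coercB : ∀ w : V, ‖w‖ ^ 2 ≤ (inner ℂ (B w) w : ℂ).re := by
    intro w
    rw [key]
    simpa using hcoer (w : H)
  -- lower bound ‖w‖ ≤ ‖B w‖
  have lower : ∀ w : V, ‖w‖ ≤ ‖B w‖ := by
    intro w
    rcases eq_or_lt_of_le (norm_nonneg w) with h | h
    · simpa [← h] using norm_nonneg (B w)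
    · have h1 : ‖w‖ ^ 2 ≤ ‖B w‖ * ‖w‖ := by
        calc ‖w‖ ^ 2 ≤ (inner ℂ (B w) w : ℂ).re := coercB w
          _ ≤ ‖(inner ℂ (B w) w : ℂ)‖ := Complex.re_le_norm _
          _ ≤ ‖B w‖ * ‖w‖ := norm_inner_le_norm _ _
      rw [pow_two] at h1
      exact le_of_mul_le_mul_right h1 h
  have hBanti : AntilipschitzWith 1 B := by
    apply ContinuousLinearMap.antilipschitz_of_bound
    intro w; simpa using lower w
  have hinj : Function.Injective B := hBanti.injective
  -- surjectivity of B
  have hclosed : IsClosed (LinearMap.range (B : V →ₗ[ℂ] V) : Set V) :=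
    by rw [LinearMap.coe_range]; exact hBanti.isClosed_range B.uniformContinuous
  have hsurj : Function.Surjective B := by
    haveI := hclosed.completeSpace_coe
    have hrange : LinearMap.range (B : V →ₗ[ℂ] V) = ⊤ := by
      rw [← (LinearMap.range (B : V →ₗ[ℂ] V)).orthogonal_orthogonal]
      rw [Submodule.eq_top_iff']
      intro v w hw
      have hw0 : w = 0 := by
        have h1 : (inner ℂ (B w) w : ℂ) = 0 := hw _ ⟨w, rfl⟩
        have h2 : ‖w‖ ^ 2 ≤ 0 := by
          have h3 := coercB w
          rw [h1] at h3
          simpa using h3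
        have h4 : ‖w‖ = 0 := le_antisymm (by nlinarith [norm_nonneg w]) (norm_nonneg w)
        simpa using h4
      simp [hw0]
    intro v
    have hv : v ∈ LinearMap.range (B : V →ₗ[ℂ] V) := by rw [hrange]; trivial
    exact hv
  -- existence and uniqueness
  have huniq : ∀ u : H, ∃! pu : V,
      ∀ v ∈ V, (inner ℂ (A (pu : H)) v : ℂ) = inner ℂ (A u) v := by
    intro u
    obtain ⟨pu, hpu⟩ := hsurj (P (A u))
    have hprop : ∀ v ∈ V, (inner ℂ (A (pu : H)) v : ℂ) = inner ℂ (A u) v := by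
      intro v hv
      have h1 : (inner ℂ (B pu) (⟨v, hv⟩ : V) : ℂ) = inner ℂ (P (A u)) (⟨v, hv⟩ : V) := by
        rw [hpu]
      rw [key] at h1
      have h2 := Submodule.starProjection_inner_eq_zero (K := V) (A u) v hv
      rw [inner_sub_left, sub_eq_zero, Submodule.starProjection_apply] at h2
      have h3 : (inner ℂ (P (A u)) (⟨v, hv⟩ : V) : ℂ) = inner ℂ ((P (A u) : H)) v := rfl
      rw [h3] at h1
      rw [h1, ← h2]
    refine ⟨pu, hprop, ?_⟩
    intro q hq
    apply hinj
    apply ext_inner_right ℂ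
    intro v
    rw [key, key, hq (v : H) v.2, hprop (v : H) v.2]
  refine ⟨huniq, ?_⟩
  -- Céa's lemma / quasi-optimality
  intro u pu hpu
  have horth : ∀ w ∈ V, (inner ℂ (A (u - (pu : H))) w : ℂ) = 0 := by
    intro w hw
    rw [map_sub, inner_sub_left, hpu w hw, sub_self]
  have cea : ∀ v : V, ‖u - (pu : H)‖ ≤ ‖A‖ * ‖u - (v : H)‖ := by
    intro v
    rcases eq_or_lt_of_le (norm_nonneg (u - (pu : H))) with h | h
    · rw [← h]
      positivity
    · set e := u - (pu : H) with he
      have h1 : (inner ℂ (A e) e : ℂ) = inner ℂ (A e) (u - (v : H)) := by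
        have hmem : ((v : H) - (pu : H)) ∈ V := V.sub_mem v.2 pu.2
        have h0 : (inner ℂ (A e) e : ℂ)
            = inner ℂ (A e) (u - (v : H)) + inner ℂ (A e) ((v : H) - (pu : H)) := by
          rw [← inner_add_right]
          congr 1
          rw [he]; abel
        rw [h0, horth _ hmem, add_zero]
      have h2 : ‖e‖ ^ 2 ≤ ‖A‖ * ‖e‖ * ‖u - (v : H)‖ := by
        calc ‖e‖ ^ 2 ≤ (inner ℂ (A e) e : ℂ).re := hcoer e
          _ = (inner ℂ (A e) (u - (v : H)) : ℂ).re := by rw [h1]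
          _ ≤ ‖(inner ℂ (A e) (u - (v : H)) : ℂ)‖ := Complex.re_le_norm _
          _ ≤ ‖A e‖ * ‖u - (v : H)‖ := norm_inner_le_norm _ _
          _ ≤ (‖A‖ * ‖e‖) * ‖u - (v : H)‖ := by
              gcongr; exact A.le_opNorm e
      rw [pow_two, mul_assoc] at h2
      have h3 := le_of_mul_le_mul_left (by linarith [h2] : ‖e‖ * ‖e‖ ≤ ‖e‖ * (‖A‖ * ‖u - (v : H)‖)) h
      exact h3
  haveI : Nonempty V := ⟨0⟩
  rw [Real.mul_iInf_of_nonneg (norm_nonneg A)]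
  exact le_ciInf cea
end

section
/- Let H be a complex Hilbert space and let A : H → H be a bounded linear operator satisfying Re⟨A u, u⟩ ≥ ‖u‖² for all u ∈ H. Let (V_n)_{n∈ℕ} be a sequence of closed subspaces of H such that inf_{v ∈ V_n} ‖u − v‖ → 0 as n → ∞ for every u ∈ H, and for each n let p_n : H → V_n denote the Galerkin projection onto V_n associated with A. Then ‖u − p_n u‖ → 0 as n → ∞ for every u ∈ H. -/
open Filter Topology

/-- If the closed subspaces `Vₙ` of a complex Hilbert space `H` satisfy
`inf_{v ∈ Vₙ} ‖u − v‖ → 0` for every `u ∈ H`, and `pₙ` is the Galerkin projection onto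
`Vₙ` associated with a coercive bounded operator `A`, then `‖u − pₙ u‖ → 0` for every
`u ∈ H`. -/
theorem galerkin_projections_converge
    {H : Type*} [NormedAddCommGroup H] [InnerProductSpace ℂ H] [CompleteSpace H]
    (A : H →L[ℂ] H)
    (hcoer : ∀ u : H, ‖u‖ ^ 2 ≤ (inner ℂ (A u) u : ℂ).re)
    (Vn : ℕ → Submodule ℂ H) (hVc : ∀ n, IsClosed ((Vn n : Set H)))
    (happrox : ∀ u : H, Tendsto (fun n => ⨅ v : Vn n, ‖u - (v : H)‖) atTop (𝓝 0))
    (p : ℕ → H → H)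
    (hpmem : ∀ n u, p n u ∈ Vn n)
    (hpGal : ∀ n (u : H), ∀ v ∈ Vn n, (inner ℂ (A (p n u)) v : ℂ) = inner ℂ (A u) v) :
    ∀ u : H, Tendsto (fun n => ‖u - p n u‖) atTop (𝓝 0) := by
  intro u
  -- Céa's lemma
  have cea : ∀ n, ∀ v ∈ Vn n, ‖u - p n u‖ ≤ ‖A‖ * ‖u - v‖ := by
    intro n v hv
    set e := u - p n u with he
    have horth : ∀ w ∈ Vn n, (inner ℂ (A e) w : ℂ) = 0 := by
      intro w hw
      rw [he, map_sub, inner_sub_left, hpGal n u w hw, sub_self]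
    have hsplit : (inner ℂ (A e) e : ℂ) = inner ℂ (A e) (u - v) := by
      have : e = (u - v) - (p n u - v) := by rw [he]; abel
      nth_rewrite 2 [this]
      rw [inner_sub_right, horth (p n u - v) (sub_mem (hpmem n u) hv), sub_zero]
    have key : ‖e‖ ^ 2 ≤ ‖A‖ * ‖e‖ * ‖u - v‖ := by
      calc ‖e‖ ^ 2 ≤ (inner ℂ (A e) e : ℂ).re := hcoer e
        _ = (inner ℂ (A e) (u - v) : ℂ).re := by rw [hsplit]
        _ ≤ ‖(inner ℂ (A e) (u - v) : ℂ)‖ := Complex.re_le_norm _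
        _ ≤ ‖A e‖ * ‖u - v‖ := norm_inner_le_norm _ _
        _ ≤ ‖A‖ * ‖e‖ * ‖u - v‖ :=
            mul_le_mul_of_nonneg_right (A.le_opNorm e) (norm_nonneg _)
    rcases eq_or_lt_of_le (norm_nonneg e) with h0 | h0
    · rw [← h0]
      positivity
    · have := key
      rw [sq] at this
      have : ‖e‖ * ‖e‖ ≤ (‖A‖ * ‖u - v‖) * ‖e‖ := by ring_nf; ring_nf at this; linarith
      exact le_of_mul_le_mul_right this h0
  have hbound : ∀ n, ‖u - p n u‖ ≤ ‖A‖ * ⨅ v : Vn n, ‖u - (v : H)‖ := by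
    intro n
    rw [Real.mul_iInf_of_nonneg (norm_nonneg A)]
    have hne : Nonempty (Vn n) := ⟨0, (Vn n).zero_mem⟩
    exact le_ciInf fun v => cea n v v.2
  have hlim : Tendsto (fun n => ‖A‖ * ⨅ v : Vn n, ‖u - (v : H)‖) atTop (𝓝 0) := by
    simpa using (happrox u).const_mul ‖A‖
  exact squeeze_zero (fun n => norm_nonneg _) hbound hlim
end

section
/- Let H be a complex Hilbert space, let A : H → H be a bounded linear operator satisfying Re⟨A u, u⟩ ≥ ‖u‖² for all u ∈ H, and let V ⊆ H be a closed subspace. Let q : H → V be the orthogonal projection onto V and define A_V : V → V by A_V(w) = q(A w) for w ∈ V. Then A_V is bijective and its inverse satisfies ‖A_V^{-1} v‖ ≤ ‖v‖ for all v ∈ V; in particular, the operator norm of A_V^{-1} is at most 1, a bound independent of the subspace V. -/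
/-- Let `A` be a coercive bounded operator on a complex Hilbert space `H`, `V ⊆ H` a
closed subspace, `q` the orthogonal projection onto `V`, and `A_V : V → V`,
`A_V w = q (A w)` the Galerkin operator of `A` on `V`. Then `A_V` is bijective and its
inverse satisfies `‖A_V⁻¹ v‖ ≤ ‖v‖` for all `v ∈ V`; in particular `‖A_V⁻¹‖ ≤ 1`,
a bound independent of the subspace `V`. -/
theorem galerkinOperator_bijective_and_inverse_norm_le_one
    {H : Type*} [NormedAddCommGroup H] [InnerProductSpace ℂ H] [CompleteSpace H]
    (A : H →L[ℂ] H)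
    (hcoer : ∀ u : H, ‖u‖ ^ 2 ≤ (inner ℂ (A u) u : ℂ).re)
    (V : Submodule ℂ H) (hV : IsClosed (V : Set H))
    -- `q` is the orthogonal projection onto `V`
    (q : H → H) (hqmem : ∀ u : H, q u ∈ V)
    (hqorth : ∀ u : H, ∀ v ∈ V, (inner ℂ (u - q u) v : ℂ) = 0)
    -- `A_V : V → V` is defined by `A_V w = q (A w)`
    (AV : V → V) (hAV : ∀ w : V, (AV w : H) = q (A (w : H))) :
    Function.Bijective AV ∧ ∀ v w : V, AV w = v → ‖w‖ ≤ ‖v‖ := by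
  haveI : CompleteSpace V := hV.completeSpace_coe
  -- the continuous linear version of AV
  set B : V →L[ℂ] V := V.orthogonalProjectionOnto.comp (A.comp V.subtypeL) with hB
  have hq : ∀ u : H, ((V.orthogonalProjectionOnto u : V) : H) = q u := fun u =>
    Submodule.eq_starProjection_of_mem_of_inner_eq_zero (K := V) (hqmem u) (fun w hw => hqorth u w hw)
  have hBAV : AV = B := by
    funext w
    apply Subtype.ext
    rw [hAV w]
    exact (hq (A w)).symm
  -- coercivity of B
  have hBcoer : ∀ w : V, ‖w‖ ^ 2 ≤ (inner ℂ (B w) w : ℂ).re := by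
    intro w
    have h1 : (inner ℂ (B w) w : ℂ) = inner ℂ (A (w : H)) (w : H) := by
      have := hqorth (A (w : H)) (w : H) w.2
      have h2 : (inner ℂ ((B w : V) : H) (w : H) : ℂ) = inner ℂ (A (w : H)) (w : H) := by
        have : (inner ℂ (A (w : H) - q (A (w : H))) (w : H) : ℂ) = 0 := this
        have hBw : ((B w : V) : H) = q (A (w : H)) := hq _
        rw [hBw]
        rw [inner_sub_left] at this
        linear_combination -this
      rw [← h2]; rfl
    rw [h1]
    simpa using hcoer (w : H)
  -- key norm bound
  have hkey : ∀ w : V, ‖w‖ ≤ ‖B w‖ := by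
    intro w
    rcases eq_or_ne w 0 with rfl | hw
    · simp
    · have h0 : 0 < ‖w‖ := norm_pos_iff.mpr hw
      have h1 : ‖w‖ ^ 2 ≤ ‖B w‖ * ‖w‖ := by
        calc ‖w‖ ^ 2 ≤ (inner ℂ (B w) w : ℂ).re := hBcoer w
        _ ≤ ‖(inner ℂ (B w) w : ℂ)‖ := Complex.re_le_norm _
        _ ≤ ‖B w‖ * ‖w‖ := norm_inner_le_norm _ _
      exact le_of_mul_le_mul_right (by nlinarith) h0
  have hanti : AntilipschitzWith 1 B := by
    apply AntilipschitzWith.of_le_mul_dist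
    intro x y
    simpa [dist_eq_norm, ← map_sub] using hkey (x - y)
  -- injectivity
  have hinj : Function.Injective B := hanti.injective
  -- surjectivity
  have hclosed : IsClosed (Set.range B) := hanti.isClosed_range B.uniformContinuous
  have hrange : LinearMap.range (B : V →ₗ[ℂ] V) = ⊤ := by
    have hcl : (LinearMap.range (B : V →ₗ[ℂ] V) : Submodule ℂ V) =
        (LinearMap.range (B : V →ₗ[ℂ] V)).topologicalClosure := by
      refine le_antisymm (Submodule.le_topologicalClosure _) ?_
      intro x hx
      have : x ∈ closure (Set.range B) := hx
      rwa [hclosed.closure_eq] at this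
    haveI : CompleteSpace (LinearMap.range (B : V →ₗ[ℂ] V)) := by
      rw [hcl]; exact (LinearMap.range (B : V →ₗ[ℂ] V)).isClosed_topologicalClosure.completeSpace_coe
    rw [← Submodule.orthogonal_eq_bot_iff]
    rw [Submodule.eq_bot_iff]
    intro v hv
    have h0 : (inner ℂ (B v) v : ℂ) = 0 := hv (B v) (LinearMap.mem_range_self _ v)
    have := hBcoer v
    rw [h0] at this
    simp only [Complex.zero_re] at this
    have : ‖v‖ = 0 := by nlinarith [norm_nonneg v, sq_nonneg ‖v‖]
    exact norm_eq_zero.mp this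
  have hsurj : Function.Surjective B := by
    intro y
    have : y ∈ LinearMap.range (B : V →ₗ[ℂ] V) := hrange ▸ Submodule.mem_top
    exact this
  refine ⟨?_, ?_⟩
  · rw [hBAV]; exact ⟨hinj, hsurj⟩
  · intro v w h
    rw [hBAV] at h
    rw [← h]
    exact hkey w
end
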